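/- arXiv:1809.00227 — 7 statements merged into one kernel-verified Lean document; each statement's English description precedes it below -/
import Mathlib

section
/- For all integers k ≥ 1 and n ≥ 3, GR_k(C_{2n}) ≥ (n-1)k + n + 1, i.e., there exists a Gallai k-coloring of the complete graph on (n-1)k + n vertices with no monochromatic cycle on 2n vertices. -/
/-- A Gallai coloring: a symmetric edge-coloring of a complete graph with no
rainbow triangle (no triangle whose three edges get three distinct colors). -/
def IsGallai {V C : Type*} (c : V → V → C) : Prop :=
  (∀ u v, c u v = c v u) ∧
  ∀ u v w : V, u ≠ v → v ≠ w → u ≠ w →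
    (c u v = c v w ∨ c v w = c u w ∨ c u v = c u w)

/-- The coloring `c` contains a cycle on `m` vertices all of whose edges have color `col`. -/
def HasCycleColor {V C : Type*} (c : V → V → C) (m : ℕ) (col : C) : Prop :=
  ∃ f : ZMod m → V, Function.Injective f ∧ ∀ i : ZMod m, c (f i) (f (i + 1)) = col

/-- The coloring `c` contains a monochromatic cycle on `m` vertices. -/
def HasMonoCycle {V C : Type*} (c : V → V → C) (m : ℕ) : Prop :=
  ∃ col : C, HasCycleColor c m col

theorem GR_even_cycle_lower (k n : ℕ) (hk : 1 ≤ k) (hn : 3 ≤ n) :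
    ∃ c : Fin ((n - 1) * k + n) → Fin ((n - 1) * k + n) → Fin k,
      IsGallai c ∧ ¬ HasMonoCycle c (2 * n) := by
  set N := (n - 1) * k + n with hN
  have hn1 : 0 < n - 1 := by omega
  set L : Fin N → ℕ := fun v =>
    if v.val < 2 * n - 1 then 0 else (v.val - (2 * n - 1)) / (n - 1) + 1 with hLdef
  have hLlt : ∀ v : Fin N, L v < k := by
    intro v
    simp only [hLdef]
    split
    · omega
    · rename_i h
      have hv := v.isLt
      rcases Nat.lt_or_ge k 2 with hk2 | hk2
      · interval_cases k
        simp only [hN, one_mul] at hv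
        omega
      · have hmul : (n - 1) * k = (n - 1) * (k - 1) + (n - 1) := by
          rw [← Nat.mul_succ]; congr 1; omega
        have hc1 : 1 ≤ (n - 1) * (k - 1) := Nat.mul_pos (by omega) (by omega)
        have hlt : v.val - (2 * n - 1) < (n - 1) * (k - 1) := by omega
        have hdiv : (v.val - (2 * n - 1)) / (n - 1) < k - 1 :=
          Nat.div_lt_of_lt_mul hlt
        omega
  refine ⟨fun u v => ⟨max (L u) (L v), by simp [Nat.max_lt, hLlt]⟩, ⟨?_, ?_⟩, ?_⟩
  · intro u v; ext; simp [max_comm]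
  · intro u v w _ _ _
    have : max (L u) (L v) = max (L v) (L w) ∨ max (L v) (L w) = max (L u) (L w) ∨
        max (L u) (L v) = max (L u) (L w) := by omega
    rcases this with h | h | h
    · exact Or.inl (by ext; exact h)
    · exact Or.inr (Or.inl (by ext; exact h))
    · exact Or.inr (Or.inr (by ext; exact h))
  · rintro ⟨col, f, hinj, hcyc⟩
    haveI : NeZero (2 * n) := ⟨by omega⟩
    set j := col.val with hj
    have hmax : ∀ i : ZMod (2 * n), max (L (f i)) (L (f (i + 1))) = j := by
      intro i
      exact congrArg Fin.val (hcyc i)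
    have hle : ∀ i : ZMod (2 * n), L (f i) ≤ j := fun i => by
      have := hmax i; omega
    rcases Nat.eq_zero_or_pos j with hj0 | hj1
    · -- all vertices have level 0, i.e. value < 2n-1; but f is injective on 2n elts
      have hall : ∀ i : ZMod (2 * n), (f i).val < 2 * n - 1 := by
        intro i
        have h := hle i
        rw [hj0, Nat.le_zero] at h
        simp only [hLdef] at h
        split at h
        · rename_i hlt; exact hlt
        · exact absurd h (Nat.succ_ne_zero _)
      have hFinj : Function.Injective
          (fun i : ZMod (2 * n) => (⟨(f i).val, hall i⟩ : Fin (2 * n - 1))) := by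
        intro a b hab
        simp only [Fin.mk.injEq] at hab
        exact hinj (Fin.ext hab)
      have hcard := Fintype.card_le_of_injective _ hFinj
      rw [ZMod.card] at hcard
      simp only [Fintype.card_fin] at hcard
      omega
    · -- level j has only n-1 vertices but the cycle needs ≥ n of them
      set base := 2 * n - 1 + (j - 1) * (n - 1) with hbase
      have hrange : ∀ v : Fin N, L v = j → base ≤ v.val ∧ v.val < base + (n - 1) := by
        intro v hv
        simp only [hLdef] at hv
        split at hv
        · omega
        · rename_i h
          have hd : (v.val - (2 * n - 1)) / (n - 1) = j - 1 := by omega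
          have hdm := Nat.div_add_mod (v.val - (2 * n - 1)) (n - 1)
          have hr : (v.val - (2 * n - 1)) % (n - 1) < n - 1 := Nat.mod_lt _ hn1
          rw [hd] at hdm
          have hb2 : (j - 1) * (n - 1) = (n - 1) * (j - 1) := mul_comm _ _
          omega
      have hchoice : ∀ m : Fin n, ∃ ε : ℕ, ε ≤ 1 ∧
          L (f (((2 * m.val + ε : ℕ) : ZMod (2 * n)))) = j := by
        intro m
        set i : ZMod (2 * n) := ((2 * m.val : ℕ) : ZMod (2 * n)) with hi
        have h1 := hmax i
        have h2 := hle i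
        have h3 := hle (i + 1)
        have : L (f i) = j ∨ L (f (i + 1)) = j := by omega
        rcases this with h | h
        · exact ⟨0, by omega, by simpa [hi] using h⟩
        · refine ⟨1, le_refl 1, ?_⟩
          have he : ((2 * m.val + 1 : ℕ) : ZMod (2 * n)) = i + 1 := by
            rw [hi]; push_cast; ring
          rw [he]; exact h
      choose ε hε1 hε2 using hchoice
      have hlt2n : ∀ m : Fin n, 2 * m.val + ε m < 2 * n := by
        intro m; have := m.isLt; have := hε1 m; omega
      have hFinj : Function.Injective (fun m : Fin n =>
          (⟨(f (((2 * m.val + ε m : ℕ) : ZMod (2 * n)))).val - base, by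
            have h := hrange _ (hε2 m); omega⟩ : Fin (n - 1))) := by
        intro a b hab
        simp only [Fin.mk.injEq] at hab
        have ha := hrange _ (hε2 a)
        have hb := hrange _ (hε2 b)
        have hfeq : f (((2 * a.val + ε a : ℕ) : ZMod (2 * n)))
            = f (((2 * b.val + ε b : ℕ) : ZMod (2 * n))) := Fin.ext (by omega)
        have hzeq := hinj hfeq
        have hval : (2 * a.val + ε a) = (2 * b.val + ε b) := by
          have h1 := ZMod.val_cast_of_lt (hlt2n a)
          have h2 := ZMod.val_cast_of_lt (hlt2n b)
          rw [← h1, ← h2, hzeq]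
        have h3 := hε1 a
        have h4 := hε1 b
        exact Fin.ext (by omega)
      have hcard := Fintype.card_le_of_injective _ hFinj
      simp only [Fintype.card_fin] at hcard
      omega
end

section
/- For all integers k ≥ 1 and n ≥ 2, there exists a Gallai k-coloring of the complete graph on n·2^k vertices with no monochromatic cycle of length 2n+1; hence GR_k(C_{2n+1}) ≥ n·2^k + 1. -/
def Dset {k : ℕ} (x y : Fin k → Bool) : Finset (Fin k) :=
  Finset.univ.filter (fun i => x i ≠ y i)

def mycol {k : ℕ} (hk : 0 < k) (x y : Fin k → Bool) : Fin k :=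
  if h : (Dset x y).Nonempty then (Dset x y).max' h else ⟨0, hk⟩

lemma Dset_comm {k : ℕ} (x y : Fin k → Bool) : Dset x y = Dset y x := by
  ext i; simp [Dset, ne_comm]

lemma mycol_comm {k : ℕ} (hk : 0 < k) (x y : Fin k → Bool) :
    mycol hk x y = mycol hk y x := by
  unfold mycol; rw [Dset_comm]

lemma agree_of_lt {k : ℕ} (hk : 0 < k) (x y : Fin k → Bool) (i : Fin k)
    (h : mycol hk x y < i) : x i = y i := by
  by_contra hne
  have hi : i ∈ Dset x y := by simp [Dset, hne]
  have hD : (Dset x y).Nonempty := ⟨i, hi⟩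
  have hle : i ≤ (Dset x y).max' hD := Finset.le_max' _ _ hi
  have : mycol hk x y = (Dset x y).max' hD := dif_pos hD
  rw [this] at h
  exact absurd hle (not_le.mpr h)

lemma diff_at {k : ℕ} (hk : 0 < k) (x y : Fin k → Bool) (h : x ≠ y) :
    x (mycol hk x y) ≠ y (mycol hk x y) := by
  have hD : (Dset x y).Nonempty := by
    rcases Function.ne_iff.mp h with ⟨i, hi⟩
    exact ⟨i, by simp [Dset, hi]⟩
  have heq : mycol hk x y = (Dset x y).max' hD := dif_pos hD
  rw [heq]
  have := (Dset x y).max'_mem hD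
  simpa [Dset] using this

lemma mycol_eq_of_eq {k : ℕ} (hk : 0 < k) (x y : Fin k → Bool) (h : x = y) :
    mycol hk x y = ⟨0, hk⟩ := by
  subst h
  have hD : ¬ (Dset x x).Nonempty := by simp [Dset]
  exact dif_neg hD

lemma key {k : ℕ} (hk : 0 < k) (x y z : Fin k → Bool)
    (h1 : mycol hk y z < mycol hk x y) (h2 : mycol hk x z < mycol hk x y) : False := by
  have hxy : x ≠ y := by
    intro h
    rw [mycol_eq_of_eq hk x y h] at h1
    simp [Fin.lt_def] at h1
  exact diff_at hk x y hxy (by rw [agree_of_lt hk x z _ h2, agree_of_lt hk y z _ h1])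

lemma bnot_of_ne : ∀ a b : Bool, a ≠ b → b = !a := by decide

theorem GR_odd_cycle_lower (k n : ℕ) (hk : 1 ≤ k) (hn : 2 ≤ n) :
    ∃ c : Fin (n * 2 ^ k) → Fin (n * 2 ^ k) → Fin k,
      IsGallai c ∧ ¬ HasMonoCycle c (2 * n + 1) := by
  have hk0 : 0 < k := hk
  haveI : NeZero (2 * n + 1) := ⟨by omega⟩
  have hcard : Fintype.card (Fin (n * 2 ^ k)) = Fintype.card (Fin n × (Fin k → Bool)) := by
    simp [Fintype.card_fun]
  let e : Fin (n * 2 ^ k) ≃ Fin n × (Fin k → Bool) := Fintype.equivOfCardEq hcard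
  refine ⟨fun i j => mycol hk0 (e i).2 (e j).2, ⟨fun u v => mycol_comm hk0 _ _, ?_⟩, ?_⟩
  · intro u v w _ _ _
    by_contra h
    push_neg at h
    obtain ⟨h1, h2, h3⟩ := h
    rcases h1.lt_or_gt with hab | hba
    · rcases h2.lt_or_gt with hbc | hcb
      · -- c max
        exact key hk0 (e u).2 (e w).2 (e v).2
          (by rw [mycol_comm]; exact hbc) (hab.trans hbc)
      · -- b max
        refine key hk0 (e v).2 (e w).2 (e u).2 ?_ ?_
        · rw [mycol_comm]; exact hcb
        · rw [mycol_comm]; exact hab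
    · rcases h3.lt_or_gt with hac | hca
      · -- c max
        exact key hk0 (e u).2 (e w).2 (e v).2
          (by rw [mycol_comm]; exact hba.trans hac) hac
      · -- a max
        exact key hk0 (e u).2 (e v).2 (e w).2 hba hca
  · rintro ⟨m, f, hf, hcyc'⟩
    have hcyc : ∀ i : ZMod (2 * n + 1),
        mycol hk0 (e (f i)).2 (e (f (i + 1))).2 = m := hcyc'
    by_cases hm : m = ⟨0, hk0⟩
    · subst hm
      have agree : ∀ i : Fin k, (⟨0, hk0⟩ : Fin k) < i →
          ∀ j : ZMod (2 * n + 1), (e (f (j + 1))).2 i = (e (f j)).2 i := by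
        intro i hi j
        have := agree_of_lt hk0 (e (f j)).2 (e (f (j + 1))).2 i (by rw [hcyc j]; exact hi)
        exact this.symm
      have base : ∀ t : ℕ, ∀ i : Fin k, (⟨0, hk0⟩ : Fin k) < i →
          (e (f ((t : ℕ) : ZMod (2 * n + 1)))).2 i = (e (f 0)).2 i := by
        intro t
        induction t with
        | zero => simp
        | succ t ih =>
          intro i hi
          have hcast : ((t + 1 : ℕ) : ZMod (2 * n + 1)) = ((t : ℕ) : ZMod (2 * n + 1)) + 1 := by
            push_cast; ring
          rw [hcast, agree i hi, ih i hi]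
      have hinj : Function.Injective
          (fun j : ZMod (2 * n + 1) => ((e (f j)).1, (e (f j)).2 ⟨0, hk0⟩)) := by
        intro j j' h
        simp only [Prod.mk.injEq] at h
        apply hf; apply e.injective
        refine Prod.ext h.1 (funext fun i => ?_)
        by_cases hi : (⟨0, hk0⟩ : Fin k) < i
        · have b1 := base j.val i hi
          have b2 := base j'.val i hi
          rw [ZMod.natCast_val, ZMod.cast_id] at b1 b2
          rw [b1, b2]
        · have hv0 : ¬ 0 < i.val := by simpa [Fin.lt_def] using hi
          have hv : i.val = 0 := by omega
          have : i = ⟨0, hk0⟩ := Fin.ext (by rw [hv])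
          rw [this]; exact h.2
      have hle := Fintype.card_le_of_injective _ hinj
      rw [ZMod.card, Fintype.card_prod, Fintype.card_fin, Fintype.card_bool] at hle
      omega
    · have hmval : 0 < m.val := Nat.pos_of_ne_zero (fun h0 => hm (Fin.ext h0))
      have hdiff : ∀ j : ZMod (2 * n + 1), (e (f j)).2 m ≠ (e (f (j + 1))).2 m := by
        intro j
        have hc := hcyc j
        have hne : (e (f j)).2 ≠ (e (f (j + 1))).2 := by
          intro h
          rw [mycol_eq_of_eq hk0 _ _ h] at hc
          exact hm hc.symm
        have := diff_at hk0 _ _ hne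
        rwa [hc] at this
      have step : ∀ j : ZMod (2 * n + 1),
          (e (f (j + 1))).2 m = !((e (f j)).2 m) := fun j => bnot_of_ne _ _ (hdiff j)
      have main : ∀ t : ℕ, (e (f ((t : ℕ) : ZMod (2 * n + 1)))).2 m
          = xor (decide (t % 2 = 1)) ((e (f 0)).2 m) := by
        intro t
        induction t with
        | zero => simp
        | succ t ih =>
          have hcast : ((t + 1 : ℕ) : ZMod (2 * n + 1)) = ((t : ℕ) : ZMod (2 * n + 1)) + 1 := by
            push_cast; ring
          rw [hcast, step, ih]
          rcases Nat.mod_two_eq_zero_or_one t with h | h <;>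
            simp [Nat.add_mod, h]
      have h1 := main (2 * n + 1)
      rw [ZMod.natCast_self] at h1
      have h2 : (2 * n + 1) % 2 = 1 := by omega
      rw [h2] at h1
      simp at h1
end

section
/- Let G be a graph on n vertices with minimum degree δ(G) ≥ n/2. Then either G is pancyclic (contains cycles of every length from 3 to n), or n is even and G is the complete bipartite graph K_{n/2,n/2}. -/
/-- The simple graph `G` contains a cycle on `m` vertices. -/
def GraphHasCycleLength {V : Type*} (G : SimpleGraph V) (m : ℕ) : Prop :=
  ∃ f : ZMod m → V, Function.Injective f ∧ ∀ i : ZMod m, G.Adj (f i) (f (i + 1))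

/-!
A longest path has crossing chords at its ends (both ends have all their `≥ n / 2` neighbours on
it), so it closes into a cycle, and by the degree condition no vertex can lie off that cycle:
`G` is Hamiltonian (Dirac). If `G` also has an `(n - 1)`-cycle `C`, the vertex off `C` has more
than `(n - 1) / 2` neighbours on `C`, so for every `ℓ` two of them lie at distance `ℓ - 2`
along `C` and close an `ℓ`-cycle. Otherwise, along a Hamiltonian cycle `0, 1, …, n - 1` the chords
`i j` and `(i + 1) (j + 2)` never coexist, since together they give an `(n - 1)`-cycle; as
`deg i + deg (i + 1) ≥ n`, this forces `(i + 1) ~ k ↔ ¬ i ~ (k - 2)`. By induction `i ~ i + s`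
exactly when `s` is odd, so `G` is complete bipartite between even and odd positions, and the
degree condition makes both sides have `n / 2` vertices.
-/

section

open Finset SimpleGraph

theorem ZMod.natCast_sub_self_eq_neg {n k : ℕ} (h : k ≤ n) : ((n - k : ℕ) : ZMod n) = -k := by
  rw [Nat.cast_sub h, ZMod.natCast_self, zero_sub]

theorem ZMod.natCast_injOn_Iio (n : ℕ) : Set.InjOn (Nat.cast : ℕ → ZMod n) (Set.Iio n) :=
  fun a ha b hb h => by
    rwa [ZMod.natCast_eq_natCast_iff', Nat.mod_eq_of_lt ha, Nat.mod_eq_of_lt hb] at h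

theorem Finset.exists_mem_add_mem_of_card_lt {α : Type*} [AddGroup α] [Fintype α] [DecidableEq α]
    {W : Finset α} (hW : Fintype.card α < 2 * #W) (c : α) : ∃ t ∈ W, t + c ∈ W := by
  have hcard : #(W.image (· - c)) = #W := card_image_of_injective _ sub_left_injective
  obtain ⟨t, ht⟩ := inter_nonempty_of_card_lt_card_add_card (subset_univ W)
    (subset_univ (W.image (· - c))) (by rw [card_univ, hcard]; omega)
  obtain ⟨htW, y, hy, rfl⟩ := And.imp_right mem_image.1 (mem_inter.1 ht)
  exact ⟨y - c, htW, by simpa using hy⟩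

variable {V : Type*} {G : SimpleGraph V}

/-- `F 0, F 1, …, F (k - 1)` are the vertices of a path in `G`, in this order. -/
def IsPathFn (G : SimpleGraph V) (k : ℕ) (F : ℕ → V) : Prop :=
  Set.InjOn F (Set.Iio k) ∧ ∀ a, a + 1 < k → G.Adj (F a) (F (a + 1))

def consFn (w : V) (F : ℕ → V) : ℕ → V
  | 0 => w
  | a + 1 => F a

namespace IsPathFn

variable {k : ℕ} {F : ℕ → V}

theorem adj (hF : IsPathFn G k F) {a b : ℕ} (hab : a + 1 = b) (hb : b < k) :
    G.Adj (F a) (F b) :=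
  hab ▸ hF.2 a (hab ▸ hb)

theorem card_le [Fintype V] (hF : IsPathFn G k F) : k ≤ Fintype.card V := by
  simpa using Fintype.card_le_of_injective _ (Set.injOn_iff_injective.1 hF.1)

theorem reverse (hF : IsPathFn G k F) : IsPathFn G k (fun a => F (k - 1 - a)) := by
  refine ⟨fun a ha b hb h => ?_, fun a ha => (hF.adj (by omega) (by omega)).symm⟩
  simp only [Set.mem_Iio] at ha hb
  have := hF.1 (Set.mem_Iio.2 (by omega)) (Set.mem_Iio.2 (by omega)) h
  omega

theorem cons (hF : IsPathFn G k F) {w : V} (hw : w ∉ F '' Set.Iio k) (hadj : G.Adj w (F 0)) :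
    IsPathFn G (k + 1) (consFn w F) := by
  refine ⟨?_, ?_⟩
  · rintro (_ | a) ha (_ | b) hb h
    · rfl
    · exact absurd ⟨b, by simpa using hb, h.symm⟩ hw
    · exact absurd ⟨a, by simpa using ha, h⟩ hw
    · simp only [Set.mem_Iio] at ha hb
      simp [hF.1 (Set.mem_Iio.2 (by omega : a < k)) (Set.mem_Iio.2 (by omega : b < k)) h]
  · rintro (_ | a) ha
    · exact hadj
    · exact hF.adj rfl (by omega)

theorem neighborSet_subset_of_maximal (hF : IsPathFn G k F)
    (hmax : ∀ F', ¬IsPathFn G (k + 1) F') : G.neighborSet (F 0) ⊆ F '' Set.Iio k :=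
  fun _ hw => by_contra fun h => hmax _ (hF.cons h (G.adj_symm hw))

theorem graphHasCycleLength (hF : IsPathFn G k F) (hk : 0 < k) (hclose : G.Adj (F (k - 1)) (F 0)) :
    GraphHasCycleLength G k := by
  have : NeZero k := ⟨hk.ne'⟩
  refine ⟨fun i => F i.val, fun i j h => ZMod.val_injective k
    (hF.1 (Set.mem_Iio.2 (ZMod.val_lt i)) (Set.mem_Iio.2 (ZMod.val_lt j)) h), fun i => ?_⟩
  show G.Adj (F i.val) (F (i + 1).val)
  have hi := ZMod.val_lt i
  have hval : (i + 1).val = (i.val + 1) % k := by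
    rw [← ZMod.val_natCast, Nat.cast_add, ZMod.natCast_zmod_val, Nat.cast_one]
  rcases (show i.val + 1 ≤ k from hi).lt_or_eq with hlt | heq
  · rw [hval, Nat.mod_eq_of_lt hlt]
    exact hF.adj rfl hlt
  · rw [hval, heq, Nat.mod_self, show i.val = k - 1 by omega]
    exact hclose

/-- The cycle is `F 0, …, F t, F (k - 1), F (k - 2), …, F (t + 1)`. -/
theorem graphHasCycleLength_of_crossing (hF : IsPathFn G k F) {t : ℕ} (ht : t + 1 < k)
    (hlast : G.Adj (F t) (F (k - 1))) (hfirst : G.Adj (F (t + 1)) (F 0)) :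
    GraphHasCycleLength G k := by
  set σ : ℕ → ℕ := fun a => if a ≤ t then a else k + t - a
  have hmaps : Set.MapsTo σ (Set.Iio k) (Set.Iio k) := by
    intro a ha
    simp only [Set.mem_Iio, σ] at ha ⊢
    split_ifs <;> omega
  have hinj : Set.InjOn σ (Set.Iio k) := by
    intro a ha b hb h
    simp only [Set.mem_Iio, σ] at ha hb h
    split_ifs at h <;> omega
  refine IsPathFn.graphHasCycleLength (F := F ∘ σ) ⟨hF.1.comp hinj hmaps, fun a ha => ?_⟩
    (by omega) (by simpa [σ, show ¬k - 1 ≤ t by omega, show k + t - (k - 1) = t + 1 by omega])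
  by_cases hat : a = t
  · subst hat
    simpa [σ, show k + a - (a + 1) = k - 1 by omega] using hlast
  · have hσa := hmaps (Set.mem_Iio.2 (by omega : a < k))
    have hσa' := hmaps (Set.mem_Iio.2 ha)
    simp only [Set.mem_Iio] at hσa hσa'
    rcases (show σ a + 1 = σ (a + 1) ∨ σ (a + 1) + 1 = σ a by simp only [σ]; split_ifs <;> omega)
      with h | h
    · exact hF.adj h hσa'
    · exact (hF.adj h hσa).symm

end IsPathFn

theorem isPathFn_of_cycle {m k : ℕ} {g : ZMod m → V} (hg : Function.Injective g)
    (hadj : ∀ i, G.Adj (g i) (g (i + 1))) (s : ZMod m) (hk : k ≤ m) :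
    IsPathFn G k (fun a => g (s + a)) := by
  refine ⟨fun a ha b hb h => ?_, fun a _ => by simpa [add_assoc] using hadj (s + a)⟩
  exact ZMod.natCast_injOn_Iio m (Set.mem_Iio.2 (lt_of_lt_of_le ha hk))
    (Set.mem_Iio.2 (lt_of_lt_of_le hb hk)) (add_left_cancel (hg h))

theorem exists_isPathFn_maximal [Fintype V] [Nonempty V] (G : SimpleGraph V) :
    ∃ k F, 0 < k ∧ IsPathFn G k F ∧ ∀ F', ¬IsPathFn G (k + 1) F' := by
  classical
  have hex : ∃ j, ¬∃ F, IsPathFn G (j + 1) F :=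
    ⟨Fintype.card V, fun ⟨F, hF⟩ => by have := hF.card_le; omega⟩
  obtain ⟨j, hj⟩ : ∃ j, Nat.find hex = j + 1 := by
    refine Nat.exists_eq_add_one.2 (Nat.pos_of_ne_zero fun h => Nat.find_spec hex ?_)
    refine ⟨fun _ => Classical.arbitrary V, fun a ha b hb _ => ?_, fun a ha => by omega⟩
    simp only [h, Set.mem_Iio] at ha hb
    omega
  obtain ⟨F, hF⟩ := not_not.1 (Nat.find_min hex (by omega : j < Nat.find hex))
  exact ⟨j + 1, F, j.succ_pos, hF, fun F' hF' => Nat.find_spec hex (hj ▸ ⟨F', hF'⟩)⟩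

theorem exists_crossing_chords [Fintype V] [DecidableRel G.Adj] {k : ℕ} (F : ℕ → V)
    (hk : 0 < k) (hfirst : G.neighborSet (F 0) ⊆ F '' Set.Iio k)
    (hlast : G.neighborSet (F (k - 1)) ⊆ F '' Set.Iio k)
    (hdeg : k ≤ G.degree (F 0) + G.degree (F (k - 1))) :
    ∃ t, t + 1 < k ∧ G.Adj (F t) (F (k - 1)) ∧ G.Adj (F (t + 1)) (F 0) := by
  classical
  set A := (range (k - 1)).filter fun t => G.Adj (F (t + 1)) (F 0)
  set B := (range (k - 1)).filter fun t => G.Adj (F t) (F (k - 1))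
  have hA : G.degree (F 0) ≤ #A := by
    rw [← card_neighborFinset_eq_degree]
    refine (card_le_card fun w hw => ?_).trans (card_image_le (f := fun t => F (t + 1)))
    rw [mem_neighborFinset] at hw
    obtain ⟨a, ha, rfl⟩ := hfirst hw
    have ha0 : a ≠ 0 := by rintro rfl; exact G.irrefl hw
    rw [Set.mem_Iio] at ha
    refine mem_image.2 ⟨a - 1, mem_filter.2 ⟨mem_range.2 (by omega), ?_⟩, ?_⟩ <;>
      rw [Nat.sub_add_cancel (Nat.pos_of_ne_zero ha0)]
    exact hw.symm
  have hB : G.degree (F (k - 1)) ≤ #B := by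
    rw [← card_neighborFinset_eq_degree]
    refine (card_le_card fun w hw => ?_).trans (card_image_le (f := F))
    rw [mem_neighborFinset] at hw
    obtain ⟨a, ha, rfl⟩ := hlast hw
    have ha0 : a ≠ k - 1 := by rintro rfl; exact G.irrefl hw
    rw [Set.mem_Iio] at ha
    exact mem_image.2 ⟨a, mem_filter.2 ⟨mem_range.2 (by omega), hw.symm⟩, rfl⟩
  obtain ⟨t, ht⟩ := inter_nonempty_of_card_lt_card_add_card (s := range (k - 1)) (t := A) (u := B)
    (filter_subset _ _) (filter_subset _ _)
    (by rw [card_range]; omega)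
  obtain ⟨htA, htB⟩ := mem_inter.1 ht
  obtain ⟨htk, ht1⟩ := mem_filter.1 htA
  exact ⟨t, by rw [mem_range] at htk; omega, (mem_filter.1 htB).2, ht1⟩

/-- If no vertex off the cycle had a neighbour on it, a vertex off the cycle and a vertex on it
would have fewer than `card V` neighbours together. -/
theorem exists_isPathFn_succ_of_cycle [Fintype V] [DecidableRel G.Adj] {k : ℕ}
    (hdeg : ∀ v, Fintype.card V ≤ 2 * G.degree v) (hk : 0 < k) (hkV : k < Fintype.card V)
    (hC : GraphHasCycleLength G k) : ∃ F, IsPathFn G (k + 1) F := by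
  classical
  have : NeZero k := ⟨hk.ne'⟩
  obtain ⟨g, hg, hadj⟩ := hC
  by_cases hout : ∃ s y, y ∉ Set.range g ∧ G.Adj y (g s)
  · obtain ⟨s, y, hy, hys⟩ := hout
    refine ⟨_, (isPathFn_of_cycle hg hadj s le_rfl).cons ?_ (by simpa using hys)⟩
    rintro ⟨a, -, rfl⟩
    exact hy ⟨_, rfl⟩
  push Not at hout
  set R := univ.image g
  have hR : #R = k := by rw [card_image_of_injective _ hg, card_univ, ZMod.card]
  obtain ⟨x, -, hx⟩ := exists_mem_notMem_of_card_lt_card (s := R) (t := univ)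
    (by rwa [hR, card_univ])
  have hxR : x ∉ Set.range g := fun ⟨i, hi⟩ => hx (hi ▸ mem_image_of_mem g (mem_univ i))
  have hdx : G.degree x + (k + 1) ≤ Fintype.card V := by
    have hsub : G.neighborFinset x ⊆ (insert x R)ᶜ := by
      intro w hw
      rw [mem_neighborFinset] at hw
      simp only [mem_compl, mem_insert, R, mem_image, mem_univ, true_and, not_or]
      exact ⟨G.ne_of_adj hw |>.symm, fun ⟨i, hi⟩ => hout i x hxR (hi ▸ hw)⟩
    have := card_le_card hsub
    rw [card_compl, card_insert_of_notMem hx, hR, card_neighborFinset_eq_degree] at this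
    omega
  have hdg : G.degree (g 0) + 1 ≤ k := by
    have hsub : G.neighborFinset (g 0) ⊆ R.erase (g 0) := by
      intro w hw
      rw [mem_neighborFinset] at hw
      refine mem_erase.2 ⟨G.ne_of_adj hw |>.symm, ?_⟩
      by_contra hwR
      exact hout 0 w (fun ⟨i, hi⟩ => hwR (hi ▸ mem_image_of_mem g (mem_univ i))) hw.symm
    have := card_le_card hsub
    rw [card_erase_of_mem (mem_image_of_mem g (mem_univ 0)), hR,
      card_neighborFinset_eq_degree] at this
    omega
  have := hdeg x
  have := hdeg (g 0)
  omega

theorem graphHasCycleLength_card [Fintype V] [Nonempty V] [DecidableRel G.Adj]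
    (hdeg : ∀ v, Fintype.card V ≤ 2 * G.degree v) : GraphHasCycleLength G (Fintype.card V) := by
  obtain ⟨k, F, hk, hF, hmax⟩ := exists_isPathFn_maximal G
  have hlast : G.neighborSet (F (k - 1)) ⊆ F '' Set.Iio k := by
    refine (hF.reverse.neighborSet_subset_of_maximal hmax).trans ?_
    rintro _ ⟨a, ha, rfl⟩
    exact ⟨k - 1 - a, by simp only [Set.mem_Iio] at ha ⊢; omega, rfl⟩
  have hends : k ≤ G.degree (F 0) + G.degree (F (k - 1)) := by
    have := hdeg (F 0)
    have := hdeg (F (k - 1))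
    have := hF.card_le
    omega
  obtain ⟨t, ht, h1, h2⟩ :=
    exists_crossing_chords F hk (hF.neighborSet_subset_of_maximal hmax) hlast hends
  have hC := hF.graphHasCycleLength_of_crossing ht h1 h2
  rcases hF.card_le.lt_or_eq with hlt | rfl
  · obtain ⟨F', hF'⟩ := exists_isPathFn_succ_of_cycle hdeg hk hlt hC
    exact absurd hF' (hmax F')
  · exact hC

theorem graphHasCycleLength_of_adj_cycle [DecidableRel G.Adj] {m ℓ : ℕ} [NeZero m]
    {g : ZMod m → V} (hg : Function.Injective g) (hadj : ∀ i, G.Adj (g i) (g (i + 1)))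
    {v : V} (hv : v ∉ Set.range g) (hW : m < 2 * #{t | G.Adj v (g t)})
    (hℓ : 2 ≤ ℓ) (hℓm : ℓ ≤ m + 1) : GraphHasCycleLength G ℓ := by
  obtain ⟨t, ht, htℓ⟩ := exists_mem_add_mem_of_card_lt (by rwa [ZMod.card]) ((ℓ - 2 : ℕ) : ZMod m)
  simp only [mem_filter, mem_univ, true_and] at ht htℓ
  have hP := (isPathFn_of_cycle hg hadj t (k := ℓ - 1) (by omega)).cons
    (by rintro ⟨a, -, h⟩; exact hv ⟨_, h⟩) (by simpa using ht)
  rw [show ℓ - 1 + 1 = ℓ by omega] at hP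
  refine hP.graphHasCycleLength (by omega) ?_
  rw [show ℓ - 1 = ℓ - 2 + 1 by omega]
  exact htℓ.symm

theorem graphHasCycleLength_of_graphHasCycleLength_card_sub_one [Fintype V] [DecidableRel G.Adj]
    (hdeg : ∀ v, Fintype.card V ≤ 2 * G.degree v)
    (hC : GraphHasCycleLength G (Fintype.card V - 1)) {ℓ : ℕ} (hℓ : 2 ≤ ℓ)
    (hℓV : ℓ ≤ Fintype.card V) : GraphHasCycleLength G ℓ := by
  classical
  obtain ⟨g, hg, hadj⟩ := hC
  have : NeZero (Fintype.card V - 1) := ⟨by omega⟩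
  set R := univ.image g
  have hR : #R = Fintype.card V - 1 := by
    rw [card_image_of_injective _ hg, card_univ, ZMod.card]
  obtain ⟨v, -, hv⟩ := exists_mem_notMem_of_card_lt_card (s := R) (t := univ)
    (by rw [hR, card_univ]; omega)
  have hRv : R = univ.erase v := eq_of_subset_of_card_le
    (fun w hw => mem_erase.2 ⟨by rintro rfl; exact hv hw, mem_univ _⟩)
    (by rw [card_erase_of_mem (mem_univ _), card_univ, hR])
  refine graphHasCycleLength_of_adj_cycle hg hadj (v := v)
    (fun ⟨i, hi⟩ => hv (hi ▸ mem_image_of_mem g (mem_univ i))) ?_ hℓ (by omega)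
  calc Fintype.card V - 1 < 2 * G.degree v := by have := hdeg v; omega
    _ ≤ 2 * #{t | G.Adj v (g t)} := by
      rw [← card_neighborFinset_eq_degree]
      gcongr
      refine (card_le_card fun w hw => ?_).trans (card_image_le (f := g))
      rw [mem_neighborFinset] at hw
      obtain ⟨i, -, rfl⟩ := mem_image.1 (hRv ▸ mem_erase.2 ⟨(G.ne_of_adj hw).symm, mem_univ _⟩)
      exact mem_image_of_mem g (by simpa using hw)

theorem even_card_and_nonempty_iso_completeBipartiteGraph [Fintype V] [Nonempty V]
    [DecidableRel G.Adj] (c : V → Prop) (hc : ∀ u v, G.Adj u v ↔ ¬(c u ↔ c v))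
    (hdeg : ∀ v, Fintype.card V ≤ 2 * G.degree v) :
    Even (Fintype.card V) ∧ Nonempty (G ≃g completeBipartiteGraph
      (Fin (Fintype.card V / 2)) (Fin (Fintype.card V / 2))) := by
  classical
  have hdeg_pos : ∀ v, c v → G.degree v = #{w | ¬c w} := fun v hv => by
    rw [← card_neighborFinset_eq_degree]; congr 1; ext w; simp [hc, hv]
  have hdeg_neg : ∀ v, ¬c v → G.degree v = #{w | c w} := fun v hv => by
    rw [← card_neighborFinset_eq_degree]; congr 1; ext w; simp [hc, hv]
  have hsum : #{w | c w} + #{w | ¬c w} = Fintype.card V := by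
    rw [card_filter_add_card_filter_not, card_univ]
  have hpos : 0 < Fintype.card V := Fintype.card_pos
  have hsides : Fintype.card V ≤ 2 * #{w | c w} ∧ Fintype.card V ≤ 2 * #{w | ¬c w} := by
    obtain ⟨v⟩ := ‹Nonempty V›
    by_cases hv : c v
    · have hQ := hdeg_pos v hv ▸ hdeg v
      obtain ⟨w, hw⟩ := card_pos.1 (by omega : 0 < #{w | ¬c w})
      exact ⟨hdeg_neg w (mem_filter.1 hw).2 ▸ hdeg w, hQ⟩
    · have hP := hdeg_neg v hv ▸ hdeg v
      obtain ⟨w, hw⟩ := card_pos.1 (by omega : 0 < #{w | c w})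
      exact ⟨hP, hdeg_pos w (mem_filter.1 hw).2 ▸ hdeg w⟩
  refine ⟨⟨#{w | c w}, by omega⟩, ⟨?_⟩⟩
  let φ : completeBipartiteGraph {v // c v} {v // ¬c v} ≃g G :=
    { toEquiv := Equiv.sumCompl c
      map_rel_iff' := by rintro (⟨u, hu⟩ | ⟨u, hu⟩) (⟨v, hv⟩ | ⟨v, hv⟩) <;> simp [hc, hu, hv] }
  exact φ.symm.trans <| completeBipartiteGraphCongr
    (Fintype.equivFinOfCardEq (by rw [Fintype.card_subtype]; omega))
    (Fintype.equivFinOfCardEq (by rw [Fintype.card_subtype]; omega))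

section HamiltonianCycle

variable {n : ℕ} [NeZero n]

/-- Chords `f i f j` and `f (i + 1) f (j + 2)` of an `n`-cycle `f` give an `(n - 1)`-cycle
avoiding `f (j + 1)`: both are the crossing chords of the path `f (j + 2), …, f j`. -/
theorem not_adj_add_one_add_two {f : ZMod n → V} (hf : Function.Injective f)
    (hcyc : ∀ i, G.Adj (f i) (f (i + 1))) (hno : ¬GraphHasCycleLength G (n - 1)) {i j : ZMod n}
    (hj : j ≠ i - 1) (hij : G.Adj (f i) (f j)) : ¬G.Adj (f (i + 1)) (f (j + 2)) := by
  intro h2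
  have hij' : i ≠ j := fun h => G.irrefl (h ▸ hij)
  have hn : n ≠ 1 := ZMod.nontrivial_iff.1 ⟨⟨i, j, hij'⟩⟩
  have hn0 := NeZero.ne n
  set t := (i - (j + 2)).val
  have hti : (t : ZMod n) = i - (j + 2) := ZMod.natCast_zmod_val _
  have ht : t + 1 < n - 1 := by
    have := ZMod.val_lt (i - (j + 2))
    by_contra h
    obtain h | h : t = n - 1 ∨ t = n - 2 := by omega
    · rw [h, ZMod.natCast_sub_self_eq_neg (by omega), Nat.cast_one] at hti
      exact hj (by linear_combination hti)
    · rw [h, ZMod.natCast_sub_self_eq_neg (by omega), Nat.cast_ofNat] at hti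
      exact hij' (by linear_combination -hti)
  refine hno ((isPathFn_of_cycle hf hcyc (j + 2) (Nat.sub_le n 1)).graphHasCycleLength_of_crossing
    ht ?_ ?_)
  · have e1 : j + 2 + (t : ZMod n) = i := by rw [hti]; ring
    have e2 : j + 2 + ((n - 1 - 1 : ℕ) : ZMod n) = j := by
      rw [Nat.sub_sub, ZMod.natCast_sub_self_eq_neg (by omega)]; push_cast; ring
    simpa only [e1, e2] using hij
  · have e1 : j + 2 + ((t + 1 : ℕ) : ZMod n) = i + 1 := by push_cast; rw [hti]; ring
    simpa only [e1, Nat.cast_zero, add_zero] using h2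

variable [Fintype V] [DecidableRel G.Adj] (e : ZMod n ≃ V) (hcyc : ∀ i, G.Adj (e i) (e (i + 1)))
  (hdeg : ∀ v, n ≤ 2 * G.degree v) (hno : ¬GraphHasCycleLength G (n - 1))
include hcyc hdeg hno

/-- By degree counting, `j ↦ j + 2` maps the neighbours of `e i` other than `e (i - 1)` onto the
non-neighbours of `e (i + 1)` other than itself. -/
theorem adj_add_one_iff_not_adj_sub_two {i k : ZMod n} (hk : k ≠ i + 1) :
    G.Adj (e (i + 1)) (e k) ↔ ¬G.Adj (e i) (e (k - 2)) := by
  classical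
  set N : ZMod n → Finset (ZMod n) := fun i => {j | G.Adj (e i) (e j)}
  have hN : ∀ i, n ≤ 2 * #(N i) := fun i => by
    rw [card_equiv e (t := G.neighborFinset (e i)) (by simp [N]), card_neighborFinset_eq_degree]
    exact hdeg _
  have hmem : ∀ i j, j ∈ N i ↔ G.Adj (e i) (e j) := fun i j => by simp [N]
  have hshift : ∀ l, (Equiv.addRight (2 : ZMod n)).symm l = l - 2 := fun l => by
    simp [sub_eq_add_neg]
  have hsub : ((N i).erase (i - 1)).map (Equiv.addRight 2).toEmbedding ⊆
      (N (i + 1))ᶜ.erase (i + 1) := by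
    intro l hl
    rw [mem_map_equiv, hshift, mem_erase, hmem] at hl
    rw [mem_erase, mem_compl, hmem]
    refine ⟨fun h => hl.1 (by rw [h]; ring), ?_⟩
    rw [← sub_add_cancel l 2]
    exact not_adj_add_one_add_two e.injective hcyc hno hl.1 hl.2
  have hcard : #((N (i + 1))ᶜ.erase (i + 1)) ≤
      #(((N i).erase (i - 1)).map (Equiv.addRight 2).toEmbedding) := by
    have hi1 : i - 1 ∈ N i := (hmem _ _).2 (by simpa using (hcyc (i - 1)).symm)
    have hi2 : i + 1 ∈ (N (i + 1))ᶜ := mem_compl.2 fun h => G.irrefl ((hmem _ _).1 h)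
    rw [card_map, card_erase_of_mem hi1, card_erase_of_mem hi2, card_compl, ZMod.card]
    have := hN i
    have := hN (i + 1)
    omega
  have hk' := congrArg (k ∈ ·) (eq_of_subset_of_card_le hsub hcard)
  simp only [mem_map_equiv, hshift, mem_erase, mem_compl, hmem, eq_iff_iff] at hk'
  have hk2 : k - 2 ≠ i - 1 := fun h => hk (by linear_combination h)
  rw [and_iff_right hk2, and_iff_right hk] at hk'
  rw [hk', not_not]

theorem adj_add_natCast_iff_odd {s : ℕ} (hs : 0 < s) (hsn : s < n) (i : ZMod n) :
    G.Adj (e i) (e (i + s)) ↔ Odd s := by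
  induction s generalizing i with
  | zero => omega
  | succ s ih =>
    rcases Nat.eq_zero_or_pos s with rfl | hs0
    · simpa using hcyc i
    have hne : i + ((s + 1 : ℕ) : ZMod n) ≠ i - 1 + 1 := by
      rw [sub_add_cancel, Ne, add_eq_left, ZMod.natCast_eq_zero_iff]
      exact Nat.not_dvd_of_pos_of_lt s.succ_pos hsn
    have hex := adj_add_one_iff_not_adj_sub_two e hcyc hdeg hno hne
    rw [sub_add_cancel, show i + ((s + 1 : ℕ) : ZMod n) - 2 = i - 1 + s by push_cast; ring,
      ih hs0 (by omega)] at hex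
    rw [hex, Nat.odd_add_one]

theorem adj_iff_not_even_val_iff (i j : ZMod n) :
    G.Adj (e i) (e j) ↔ ¬(Even i.val ↔ Even j.val) := by
  wlog hij : i.val ≤ j.val generalizing i j
  · rw [G.adj_comm, this j i (by omega), iff_comm (a := Even j.val)]
  rcases hij.lt_or_eq with hlt | heq
  · have hj : j = i + ((j.val - i.val : ℕ) : ZMod n) := by
      rw [Nat.cast_sub hlt.le, ZMod.natCast_zmod_val, ZMod.natCast_zmod_val]; ring
    conv_lhs => rw [hj]
    rw [adj_add_natCast_iff_odd e hcyc hdeg hno (by omega) (by have := ZMod.val_lt j; omega),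
      Nat.odd_sub hlt.le, ← Nat.not_even_iff_odd]
    tauto
  · simp [ZMod.val_injective n heq]

end HamiltonianCycle

end

theorem bondy_pancyclic (V : Type*) [Fintype V] (G : SimpleGraph V) [DecidableRel G.Adj]
    (hdeg : Fintype.card V ≤ 2 * G.minDegree) :
    (∀ ℓ : ℕ, 3 ≤ ℓ → ℓ ≤ Fintype.card V → GraphHasCycleLength G ℓ) ∨
    (Even (Fintype.card V) ∧
      Nonempty (G ≃g completeBipartiteGraph (Fin (Fintype.card V / 2))
        (Fin (Fintype.card V / 2)))) := by
  have hdegv : ∀ v, Fintype.card V ≤ 2 * G.degree v :=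
    fun v => hdeg.trans (Nat.mul_le_mul_left 2 (G.minDegree_le_degree v))
  by_cases hn : 3 ≤ Fintype.card V
  swap
  · exact Or.inl fun ℓ h3 hℓ => absurd (h3.trans hℓ) hn
  by_cases hC : GraphHasCycleLength G (Fintype.card V - 1)
  · exact Or.inl fun ℓ h3 hℓ =>
      graphHasCycleLength_of_graphHasCycleLength_card_sub_one hdegv hC (by omega) hℓ
  have : Nonempty V := Fintype.card_pos_iff.1 (by omega)
  obtain ⟨f, hf, hcyc⟩ := graphHasCycleLength_card hdegv
  have : NeZero (Fintype.card V) := ⟨by omega⟩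
  let e := Equiv.ofBijective f ((Fintype.bijective_iff_injective_and_card f).2 ⟨hf, ZMod.card _⟩)
  refine Or.inr (even_card_and_nonempty_iso_completeBipartiteGraph
    (fun v => Even (e.symm v).val) (fun u v => ?_) hdegv)
  simpa using adj_iff_not_even_val_iff e hcyc hdegv hC (e.symm u) (e.symm v)
end

section
/- Let G be an edge-colored complete graph containing no monochromatic cycle on 2n+1 vertices, and let Y, Z ⊆ V(G) be disjoint sets with |Y| ≥ n and |Z| ≥ n such that every edge between Y and Z has the same color (say blue). Then: (1) no vertex of V(G) \ (Y ∪ Z) is joined in blue to all vertices of Y ∪ Z; (2) if |Z| ≥ n+1, then the induced complete graph on Z has no blue edge; and (3) if |Y| ≥ n+1, then the induced complete graph on Y has no blue edge. -/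
section

variable {V C : Type*} {c : V → V → C} {col : C}

theorem hasCycleColor_one (c : V → V → C) (v : V) : HasCycleColor c 1 (c v v) :=
  ⟨fun _ => v, fun i j _ => Subsingleton.elim i j, fun _ => rfl⟩

theorem hasCycleColor_of_isChain {x : V} {l : List V} (hl : (x :: l).Nodup)
    (hchain : (x :: l).IsChain (c · · = col))
    (hclose : c ((x :: l).getLast (List.cons_ne_nil x l)) x = col) :
    HasCycleColor c (x :: l).length col := by
  refine ⟨fun i => (x :: l)[i.val]'(ZMod.val_lt i),
    fun i j hij => ZMod.val_injective _ (hl.getElem_inj_iff.mp hij), fun i => ?_⟩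
  have hsucc : (i + 1).val = (i.val + 1) % (x :: l).length := by
    rw [ZMod.val_add, ZMod.val_one_eq_one_mod, Nat.add_mod_mod]
  by_cases h : i.val + 1 < (x :: l).length
  · simp only [hsucc, Nat.mod_eq_of_lt h]
    exact hchain.getElem _ h
  · have hlast : i.val = l.length := by
      have := ZMod.val_lt i
      simp only [List.length_cons] at h this
      omega
    simp only [hsucc, hlast, List.length_cons, Nat.mod_self]
    simpa [List.getLast_eq_getElem] using hclose

theorem exists_alternating_path (hsym : ∀ u v, c u v = c v u) (n : ℕ) {A B : Set V} {x y : V}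
    (hAB : Disjoint A B) (hcross : ∀ a ∈ A, ∀ b ∈ B, c a b = col)
    (hx : x ∈ A) (hy : y ∈ A) (hxy : x ≠ y) (hA : n + 2 ≤ A.ncard) (hB : n + 1 ≤ B.ncard) :
    ∃ l : List V, l.length = 2 * n + 2 ∧ (x :: l).Nodup ∧ (x :: l).IsChain (c · · = col) ∧
      (x :: l).getLast (List.cons_ne_nil x l) = y ∧ ∀ v ∈ x :: l, v ∈ A ∪ B := by
  obtain ⟨b, hb⟩ := Set.nonempty_of_ncard_ne_zero (s := B) (by omega)
  have hxb : x ≠ b := hAB.ne_of_mem hx hb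
  induction n generalizing A B x b with
  | zero =>
    refine ⟨[b, y], rfl, ?_, ?_, rfl, ?_⟩
    · simp [hxb, hxy, (hAB.ne_of_mem hy hb).symm]
    · simp [hcross x hx b hb, hsym b, hcross y hy b hb]
    · simp [hx, hb, hy]
  | succ n ih =>
    obtain ⟨x', ⟨hx'A, hx'x⟩, hx'y⟩ := Set.exists_ne_of_one_lt_ncard
      (s := A \ {x}) (by rw [Set.ncard_sdiff_singleton_of_mem hx]; omega) y
    obtain ⟨b', hb'B, hb'b⟩ := Set.exists_ne_of_one_lt_ncard (s := B) (by omega) b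
    obtain ⟨l, hlen, hnodup, hchain, hlast, hmem⟩ := ih (A := A \ {x}) (B := B \ {b})
      (hAB.mono Set.sdiff_subset Set.sdiff_subset) (fun a ha b' hb' => hcross a ha.1 b' hb'.1)
      ⟨hx'A, hx'x⟩ ⟨hy, hxy.symm⟩ hx'y
      (by rw [Set.ncard_sdiff_singleton_of_mem hx]; omega)
      (by rw [Set.ncard_sdiff_singleton_of_mem hb]; omega)
      b' ⟨hb'B, hb'b⟩ (hAB.ne_of_mem hx'A hb'B)
    have hx_notMem : x ∉ x' :: l := fun h => by
      rcases hmem x h with ⟨-, hne⟩ | ⟨hxB, -⟩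
      exacts [hne rfl, hAB.ne_of_mem hx hxB rfl]
    have hb_notMem : b ∉ x' :: l := fun h => by
      rcases hmem b h with ⟨hbA, -⟩ | ⟨-, hne⟩
      exacts [hAB.ne_of_mem hbA hb rfl, hne rfl]
    refine ⟨b :: x' :: l, by simp [hlen]; ring, ?_, ?_, by simpa using hlast, ?_⟩
    · simp only [List.nodup_cons, List.mem_cons] at hnodup hx_notMem hb_notMem ⊢
      tauto
    · simp only [List.isChain_cons_cons] at hchain ⊢
      exact ⟨hcross x hx b hb, by rw [hsym]; exact hcross x' hx'A b hb, hchain⟩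
    · rintro v (_ | ⟨_, _ | ⟨_, hv⟩⟩)
      exacts [.inl hx, .inr hb, (hmem v hv).imp And.left And.left]

theorem hasCycleColor_of_completeBetween (hsym : ∀ u v, c u v = c v u) (n : ℕ) {A B : Set V}
    {x y : V} (hAB : Disjoint A B) (hcross : ∀ a ∈ A, ∀ b ∈ B, c a b = col)
    (hx : x ∈ A) (hy : y ∈ A) (hxy : x ≠ y) (hyx : c y x = col)
    (hA : n + 2 ≤ A.ncard) (hB : n + 1 ≤ B.ncard) :
    HasCycleColor c (2 * n + 3) col := by
  obtain ⟨l, hlen, hnodup, hchain, hlast, -⟩ :=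
    exists_alternating_path hsym n hAB hcross hx hy hxy hA hB
  have hcycle := hasCycleColor_of_isChain hnodup hchain (hlast ▸ hyx)
  rwa [List.length_cons, hlen] at hcycle

end

theorem lemma_L_general {V C : Type*} (n : ℕ) (c : V → V → C)
    (hsym : ∀ u v, c u v = c v u)
    (hno : ¬ HasMonoCycle c (2 * n + 1))
    (Y Z : Set V) (blue : C) (hYZ : Disjoint Y Z)
    (hY : n ≤ Y.ncard) (hZ : n ≤ Z.ncard)
    (hblue : ∀ y ∈ Y, ∀ z ∈ Z, c y z = blue) :
    (∀ v ∈ (Y ∪ Z)ᶜ, ¬ (∀ w ∈ Y ∪ Z, c v w = blue)) ∧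
    (n + 1 ≤ Z.ncard → ∀ z1 ∈ Z, ∀ z2 ∈ Z, z1 ≠ z2 → c z1 z2 ≠ blue) ∧
    (n + 1 ≤ Y.ncard → ∀ y1 ∈ Y, ∀ y2 ∈ Y, y1 ≠ y2 → c y1 y2 ≠ blue) := by
  rcases n with _ | n
  · have : IsEmpty V := ⟨fun v => hno ⟨_, hasCycleColor_one c v⟩⟩
    exact ⟨fun v => isEmptyElim v, fun _ z => isEmptyElim z, fun _ y => isEmptyElim y⟩
  have hcycle {A B : Set V} {x y : V} (hAB : Disjoint A B)
      (hcross : ∀ a ∈ A, ∀ b ∈ B, c a b = blue) (hx : x ∈ A) (hy : y ∈ A) (hxy : x ≠ y)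
      (hyx : c y x = blue) (hA : n + 2 ≤ A.ncard) (hB : n + 1 ≤ B.ncard) : False :=
    hno ⟨blue, hasCycleColor_of_completeBetween hsym n hAB hcross hx hy hxy hyx hA hB⟩
  refine ⟨fun v hv hall => ?_, fun hZ1 z1 hz1 z2 hz2 hne hcol => ?_,
    fun hY1 y1 hy1 y2 hy2 hne hcol => ?_⟩
  · obtain ⟨y, hy⟩ := Set.nonempty_of_ncard_ne_zero (s := Y) (by omega)
    have hvY : v ∉ Y := fun h => hv (.inl h)
    have hvZ : v ∉ Z := fun h => hv (.inr h)
    refine hcycle (A := insert v Y) (Set.disjoint_insert_left.2 ⟨hvZ, hYZ⟩) ?_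
      (Set.mem_insert v Y) (Set.mem_insert_of_mem v hy) (ne_of_mem_of_not_mem hy hvY).symm
      (by rw [hsym]; exact hall y (.inl hy)) ?_ hZ
    · rintro a (rfl | ha) b hb
      exacts [hall b (.inr hb), hblue a ha b hb]
    · rw [Set.ncard_insert_of_notMem hvY (Set.finite_of_ncard_ne_zero (by omega))]
      omega
  · exact hcycle hYZ.symm (fun z hz y hy => hsym z y ▸ hblue y hy z hz) hz2 hz1 hne.symm hcol
      hZ1 hY
  · exact hcycle hYZ hblue hy2 hy1 hne.symm hcol hY1 hZ

theorem lemma_L {V C : Type*} [Fintype V] (n : ℕ) (c : V → V → C)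
    (hsym : ∀ u v, c u v = c v u)
    (hno : ¬ HasMonoCycle c (2 * n + 1))
    (Y Z : Set V) (blue : C) (hYZ : Disjoint Y Z)
    (hY : n ≤ Y.ncard) (hZ : n ≤ Z.ncard)
    (hblue : ∀ y ∈ Y, ∀ z ∈ Z, c y z = blue) :
    (∀ v ∈ (Y ∪ Z)ᶜ, ¬ (∀ w ∈ Y ∪ Z, c v w = blue)) ∧
    (n + 1 ≤ Z.ncard → ∀ z1 ∈ Z, ∀ z2 ∈ Z, z1 ≠ z2 → c z1 z2 ≠ blue) ∧
    (n + 1 ≤ Y.ncard → ∀ y1 ∈ Y, ∀ y2 ∈ Y, y1 ≠ y2 → c y1 y2 ≠ blue) :=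
  lemma_L_general n c hsym hno Y Z blue hYZ hY hZ hblue
end

section
/- Let G be an edge-colored complete graph with |V(G)| ≥ 2n+1 whose vertex set is partitioned into parts V_1, ..., V_p, each part of size at most n, such that every edge between two distinct parts is colored blue. Then G contains a blue cycle of length 2n+1. -/
theorem blue_odd_cycle_of_multipartite {V C ι : Type*} [Fintype V] (n : ℕ)
    (c : V → V → C) (hsym : ∀ u v, c u v = c v u) (blue : C)
    (P : V → ι) (hparts : ∀ i : ι, Set.ncard {v : V | P v = i} ≤ n)
    (hblue : ∀ u v : V, P u ≠ P v → c u v = blue)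
    (hcard : 2 * n + 1 ≤ Fintype.card V) :
    HasCycleColor c (2 * n + 1) blue := by
  classical
  set m := 2 * n + 1 with hm
  haveI : NeZero m := ⟨by omega⟩
  -- n ≥ 1
  have hn1 : 1 ≤ n := by
    by_contra h
    have hV : 0 < Fintype.card V := by omega
    obtain ⟨v⟩ := Fintype.card_pos_iff.mp hV
    have h1 : 0 < Set.ncard {u : V | P u = P v} :=
      (Set.ncard_pos (Set.toFinite _)).mpr ⟨v, rfl⟩
    have := hparts (P v)
    omega
  -- a numbering of parts
  let e : V ≃ Fin (Fintype.card V) := Fintype.equivFin V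
  let q : V → ℕ := fun v =>
    ((Finset.univ.filter (fun u => P u = P v)).image (fun u => (e u : ℕ))).min'
      ⟨e v, Finset.mem_image.mpr ⟨v, Finset.mem_filter.mpr ⟨Finset.mem_univ v, rfl⟩, rfl⟩⟩
  have hq : ∀ u v : V, q u = q v ↔ P u = P v := by
    intro u v
    constructor
    · intro h
      have hu := Finset.min'_mem
        ((Finset.univ.filter (fun w => P w = P u)).image (fun w => (e w : ℕ)))
        ⟨e u, Finset.mem_image.mpr ⟨u, Finset.mem_filter.mpr ⟨Finset.mem_univ u, rfl⟩, rfl⟩⟩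
      have hv := Finset.min'_mem
        ((Finset.univ.filter (fun w => P w = P v)).image (fun w => (e w : ℕ)))
        ⟨e v, Finset.mem_image.mpr ⟨v, Finset.mem_filter.mpr ⟨Finset.mem_univ v, rfl⟩, rfl⟩⟩
      obtain ⟨wu, hwu, hwu'⟩ := Finset.mem_image.mp hu
      obtain ⟨wv, hwv, hwv'⟩ := Finset.mem_image.mp hv
      have hval : (e wu : ℕ) = (e wv : ℕ) := by
        rw [hwu', hwv']; exact h
      have hw : wu = wv := e.injective (Fin.val_injective hval)
      have h1 := (Finset.mem_filter.mp hwu).2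
      have h2 := (Finset.mem_filter.mp hwv).2
      rw [← h1, ← h2, hw]
    · intro h
      have hset : (Finset.univ.filter fun w => P w = P u)
          = (Finset.univ.filter fun w => P w = P v) := by
        ext w; simp [h]
      unfold q
      simp_rw [hset]
  -- embedding of Fin m into V
  obtain ⟨h0⟩ : Nonempty (Fin m ↪ V) := by
    apply Function.Embedding.nonempty_of_card_le
    simpa using hcard
  -- sort by q
  let σ := Tuple.sort (q ∘ h0)
  let g : Fin m → V := h0 ∘ σ
  have hginj : Function.Injective g := h0.injective.comp σ.injective
  have hmono : Monotone (q ∘ g) := Tuple.monotone_sort (q ∘ h0)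
  -- interval property
  have key : ∀ i j : Fin m, (i : ℕ) ≤ (j : ℕ) → P (g i) = P (g j) →
      (j : ℕ) - (i : ℕ) + 1 ≤ n := by
    intro i j hij hP
    have hsub : ∀ k ∈ Finset.Icc i j, g k ∈ Finset.univ.filter (fun v => P v = P (g i)) := by
      intro k hk
      obtain ⟨h1, h2⟩ := Finset.mem_Icc.mp hk
      have hq1 : q (g i) ≤ q (g k) := hmono h1
      have hq2 : q (g k) ≤ q (g j) := hmono h2
      have hqji : q (g j) = q (g i) := (hq (g j) (g i)).mpr hP.symm
      have hqki : q (g k) = q (g i) := by omega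
      exact Finset.mem_filter.mpr ⟨Finset.mem_univ _, (hq _ _).mp hqki⟩
    have hcardle := Finset.card_le_card_of_injOn g hsub hginj.injOn
    rw [Fin.card_Icc] at hcardle
    have hle : (Finset.univ.filter (fun v => P v = P (g i))).card ≤ n := by
      have h1 := hparts (P (g i))
      have heq : {v : V | P v = P (g i)} = ↑(Finset.univ.filter (fun v => P v = P (g i))) := by
        ext v; simp
      rw [heq, Set.ncard_coe_finset] at h1
      exact h1
    omega
  -- coprimality
  have hcop : Nat.Coprime (n + 1) m := by
    unfold Nat.Coprime
    rw [hm]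
    have e1 : 2 * n + 1 = n + (n + 1) := by omega
    rw [Nat.gcd_comm, e1, Nat.gcd_add_self_left]
    have e2 : n + 1 = 1 + n := by omega
    rw [Nat.gcd_comm, e2, Nat.gcd_add_self_left]
    exact Nat.gcd_one_left n
  let u : (ZMod m)ˣ := ZMod.unitOfCoprime (n + 1) hcop
  have hu : (u : ZMod m) = ((n + 1 : ℕ) : ZMod m) := ZMod.coe_unitOfCoprime _ _
  have huval : ((u : ZMod m)).val = n + 1 := by
    rw [hu]; exact ZMod.val_cast_of_lt (by omega)
  let F : ZMod m → Fin m := fun x => ⟨x.val, ZMod.val_lt x⟩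
  have hFinj : Function.Injective F := fun x y hxy =>
    ZMod.val_injective m (congrArg Fin.val hxy)
  let f : ZMod m → V := fun j => g (F ((u : ZMod m) * j))
  -- the key distance fact and the edge property
  have hedge : ∀ j : ZMod m, P (f j) ≠ P (f (j + 1)) := by
    intro j hPeq
    set a : ZMod m := (u : ZMod m) * j with ha
    have hb : (u : ZMod m) * (j + 1) = a + (u : ZMod m) := by ring
    have hbval : ((u : ZMod m) * (j + 1)).val = (a.val + (n + 1)) % m := by
      rw [hb, ZMod.val_add, huval]
    have haval : a.val < m := ZMod.val_lt a
    -- clean up hPeq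
    have hPeq' : P (g (F a)) = P (g (F (a + (u : ZMod m)))) := by
      have hfj : f (j + 1) = g (F (a + (u : ZMod m))) := by
        show g (F ((u : ZMod m) * (j + 1))) = _
        rw [hb]
      rw [← hfj]; exact hPeq
    have hFa : ((F a : Fin m) : ℕ) = a.val := rfl
    have hFb : ((F (a + (u : ZMod m)) : Fin m) : ℕ) = (a.val + (n + 1)) % m := by
      show (a + (u : ZMod m)).val = _
      rw [ZMod.val_add, huval]
    by_cases hw : a.val + (n + 1) < m
    · -- no wraparound: distance n+1
      have hmod : (a.val + (n + 1)) % m = a.val + (n + 1) := Nat.mod_eq_of_lt hw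
      have hk := key (F a) (F (a + (u : ZMod m)))
        (by rw [hFa, hFb, hmod]; omega) hPeq'
      rw [hFa, hFb, hmod] at hk
      omega
    · -- wraparound: distance n
      push_neg at hw
      have hmod : (a.val + (n + 1)) % m = a.val + (n + 1) - m := by
        rw [Nat.mod_eq_sub_mod hw, Nat.mod_eq_of_lt (by omega)]
      have hk := key (F (a + (u : ZMod m))) (F a)
        (by rw [hFa, hFb, hmod]; omega) hPeq'.symm
      rw [hFa, hFb, hmod] at hk
      omega
  refine ⟨f, ?_, ?_⟩
  · intro x y hxy
    have h1 := hFinj (hginj hxy)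
    exact u.isUnit.mul_right_injective h1
  · intro j
    exact hblue _ _ (hedge j)
end

section
/- Let H be a complete multipartite graph on N ≥ 2n+1 vertices (n ≥ 1) in which every part has at most n vertices. Then H contains a cycle of length 2n+1. -/
theorem multipartite_odd_cycle {V ι : Type*} [Fintype V] (n : ℕ) (hn : 1 ≤ n)
    (P : V → ι) (hparts : ∀ i : ι, Set.ncard {v : V | P v = i} ≤ n)
    (hcard : 2 * n + 1 ≤ Fintype.card V) :
    ∃ f : ZMod (2 * n + 1) → V, Function.Injective f ∧
      ∀ i : ZMod (2 * n + 1), P (f i) ≠ P (f (i + 1)) := by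
  classical
  haveI : Nonempty V := Fintype.card_pos_iff.mp (by omega)
  set m := 2 * n + 1 with hm
  haveI : NeZero m := ⟨by omega⟩
  obtain ⟨g⟩ : Nonempty (Fin m ↪ V) :=
    Function.Embedding.nonempty_of_card_le (by simpa using hcard)
  -- key function grouping parts
  let eV := Fintype.equivFin V
  let key : V → Fin (Fintype.card V) := fun v => eV (Function.invFun P (P v))
  have hkey : ∀ v w, key v = key w ↔ P v = P w := by
    intro v w
    constructor
    · intro h
      have h2 : Function.invFun P (P v) = Function.invFun P (P w) := eV.injective h
      have hv : P (Function.invFun P (P v)) = P v := Function.invFun_eq ⟨v, rfl⟩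
      have hw : P (Function.invFun P (P w)) = P w := Function.invFun_eq ⟨w, rfl⟩
      rw [← hv, ← hw, h2]
    · intro h; simp only [key, h]
  let σ := Tuple.sort (fun c : Fin m => key (g c))
  have hmono : Monotone ((fun c : Fin m => key (g c)) ∘ σ) :=
    Tuple.monotone_sort _
  have hginj : Function.Injective (fun c : Fin m => g (σ c)) :=
    g.injective.comp σ.injective
  -- fibers are short intervals
  have hfib : ∀ x y : Fin m, x ≤ y → P (g (σ x)) = P (g (σ y)) → (y : ℕ) < (x : ℕ) + n := by
    intro x y hxy hP
    set s : Set (Fin m) := {c | P (g (σ c)) = P (g (σ x))} with hs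
    have hsub : Set.Icc x y ⊆ s := by
      intro c hc
      have h1 : key (g (σ x)) ≤ key (g (σ c)) := hmono hc.1
      have h2 : key (g (σ c)) ≤ key (g (σ y)) := hmono hc.2
      have hxyk : key (g (σ x)) = key (g (σ y)) := (hkey _ _).mpr hP
      have : key (g (σ c)) = key (g (σ x)) := le_antisymm (hxyk ▸ h2) h1
      exact (hkey _ _).mp this
    have h1 : (Set.Icc x y).ncard ≤ s.ncard :=
      Set.ncard_le_ncard hsub (Set.toFinite s)
    have h2 : s.ncard ≤ n := by
      refine le_trans (Set.ncard_le_ncard_of_injOn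
        (t := {v : V | P v = P (g (σ x))}) (fun c => g (σ c))
        (fun c hc => hc) (fun a _ b _ h => hginj h) (Set.toFinite _)) ?_
      exact hparts (P (g (σ x)))
    have h3 : (Set.Icc x y).ncard = (y : ℕ) + 1 - (x : ℕ) := by
      rw [← Finset.coe_Icc, Set.ncard_coe_finset, Fin.card_Icc]
    have hle : (x : ℕ) ≤ (y : ℕ) := hxy
    omega
  -- coprimality and unit
  have hcop : Nat.Coprime (n + 1) m := by
    have h2 : Nat.Coprime (n + 1) n := by
      have h1 : Nat.Coprime (1 + n) n := Nat.coprime_add_self_left.mpr (Nat.coprime_one_left n)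
      rwa [add_comm] at h1
    have h3 : Nat.Coprime (n + 1) (n + (n + 1)) := Nat.coprime_add_self_right.mpr h2
    have he : n + (n + 1) = m := by omega
    rwa [he] at h3
  let u : (ZMod m)ˣ := ZMod.unitOfCoprime (n + 1) hcop
  have hu : (u : ZMod m) = ((n + 1 : ℕ) : ZMod m) := ZMod.coe_unitOfCoprime _ _
  have huval : ((u : ZMod m)).val = n + 1 := by
    rw [hu, ZMod.val_natCast, Nat.mod_eq_of_lt (by omega)]
  -- the map
  let f : ZMod m → V := fun i => g (σ ⟨((u : ZMod m) * i).val, ZMod.val_lt _⟩)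
  refine ⟨f, ?_, ?_⟩
  · intro i j h
    have h1 : ((u : ZMod m) * i).val = ((u : ZMod m) * j).val :=
      congrArg Fin.val (hginj h)
    have h2 : (u : ZMod m) * i = (u : ZMod m) * j := ZMod.val_injective m h1
    have h3 := congrArg (fun z => ((u⁻¹ : (ZMod m)ˣ) : ZMod m) * z) h2
    simpa [← mul_assoc, Units.inv_mul] using h3
  · intro i
    set a : ℕ := ((u : ZMod m) * i).val with ha
    set b : ℕ := ((u : ZMod m) * (i + 1)).val with hb
    have ham : a < m := ZMod.val_lt _
    have hbm : b < m := ZMod.val_lt _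
    have hab : b = (a + (n + 1)) % m := by
      have : (u : ZMod m) * (i + 1) = (u : ZMod m) * i + (u : ZMod m) := by ring
      rw [hb, this, ZMod.val_add, huval, ha]
    intro hP
    by_cases hc : a + (n + 1) < m
    · have hb' : b = a + (n + 1) := by rw [hab, Nat.mod_eq_of_lt hc]
      have := hfib ⟨a, ham⟩ ⟨b, hbm⟩ (by simp [Fin.le_def]; omega) hP
      simp at this; omega
    · have hb' : b = a - n := by
        have h1 : a + (n + 1) - m < m := by omega
        have : (a + (n + 1)) % m = a + (n + 1) - m := by
          rw [Nat.mod_eq_sub_mod (by omega), Nat.mod_eq_of_lt h1]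
        rw [hab, this]; omega
      have := hfib ⟨b, hbm⟩ ⟨a, ham⟩ (by simp [Fin.le_def]; omega) hP.symm
      simp at this; omega
end

section
/- For every Gallai coloring c of a complete graph G with at least 2 vertices, the vertex set V(G) can be partitioned into nonempty sets V_1, ..., V_p with p ≥ 2 such that: (a) at most two colors appear on edges joining vertices in different parts, and (b) for each pair of distinct parts V_i, V_j, all edges between V_i and V_j receive the same color. -/
open Function SimpleGraph

section

variable {V W C : Type*} {c : V → V → C}

def colorGraph (c : V → V → C) (γ : C) : SimpleGraph V :=
  SimpleGraph.fromRel fun x y => c x y = γ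

lemma colorGraph_adj (hsymm : ∀ u v, c u v = c v u) {γ : C} {x y : V} :
    (colorGraph c γ).Adj x y ↔ x ≠ y ∧ c x y = γ := by
  simp [colorGraph, hsymm y x]

lemma exists_color_eq_of_connected (hsymm : ∀ u v, c u v = c v u) {γ : C}
    (hγ : (colorGraph c γ).Connected) {v w : V} (hvw : v ≠ w) :
    ∃ y : {x // x ≠ v}, c v y = γ := by
  obtain ⟨y, hy⟩ := (hγ.preconnected v w).nonempty_neighborSet_left hvw
  obtain ⟨hne, hcol⟩ := (colorGraph_adj hsymm).1 hy
  exact ⟨⟨y, hne.symm⟩, hcol⟩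

lemma IsGallai.comp_injective (hc : IsGallai c) {s : W → V}
    (hs : Injective s) : IsGallai fun x y => c (s x) (s y) :=
  ⟨fun _ _ => hc.1 _ _, fun _ _ _ hxy hyz hxz => hc.2 _ _ _ (hs.ne hxy) (hs.ne hyz) (hs.ne hxz)⟩

lemma IsGallai.color_eq_of_reachable (hc : IsGallai c) {γ : C} {x x' z : V}
    (hxx' : (colorGraph c γ).Reachable x x') (hxz : ¬ (colorGraph c γ).Reachable x z) :
    c x' z = c x z := by
  rw [reachable_iff_reflTransGen] at hxx'
  induction hxx' with
  | refl => rfl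
  | @tail b t hxb hbt ih =>
    have hb : (colorGraph c γ).Reachable x b := (reachable_iff_reflTransGen _ _).2 hxb
    have ht : (colorGraph c γ).Reachable x t := hb.trans hbt.reachable
    have hnot : ∀ y, (colorGraph c γ).Reachable x y → y ≠ z ∧ c y z ≠ γ := by
      intro y hy
      have hyz : y ≠ z := by rintro rfl; exact hxz hy
      exact ⟨hyz, fun h => hxz (hy.trans ((colorGraph_adj hc.1).2 ⟨hyz, h⟩).reachable)⟩
    obtain ⟨hbt, hbtγ⟩ := (colorGraph_adj hc.1).1 hbt
    rcases hc.2 b t z hbt (hnot t ht).1 (hnot b hb).1 with h | h | h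
    · exact absurd (h ▸ hbtγ) (hnot t ht).2
    · exact h.trans ih
    · exact absurd (h ▸ hbtγ) (hnot b hb).2

lemma IsGallai.color_eq_of_reachable₂ (hc : IsGallai c) {γ : C} {u u' v v' : V}
    (hu : (colorGraph c γ).Reachable u u') (hv : (colorGraph c γ).Reachable v v')
    (huv : ¬ (colorGraph c γ).Reachable u v) : c u v = c u' v' :=
  calc c u v = c u' v := (hc.color_eq_of_reachable hu huv).symm
    _ = c v u' := hc.1 _ _
    _ = c v' u' := (hc.color_eq_of_reachable hv fun h => huv (hu.trans h.symm)).symm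
    _ = c u' v' := hc.1 _ _

lemma SimpleGraph.card_connectedComponent_lt [Fintype V] {G : SimpleGraph V}
    [Fintype G.ConnectedComponent] {x y : V} (hxy : G.Adj x y) :
    Fintype.card G.ConnectedComponent < Fintype.card V :=
  Fintype.card_lt_of_surjective_not_injective _ Quot.mk_surjective fun hinj =>
    hxy.ne (hinj (ConnectedComponent.sound hxy.reachable))

lemma SimpleGraph.one_lt_card_connectedComponent [Nonempty V] {G : SimpleGraph V}
    [Fintype G.ConnectedComponent] (hG : ¬ G.Connected) :
    1 < Fintype.card G.ConnectedComponent := by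
  obtain ⟨u, v, huv⟩ : ∃ u v, ¬ G.Reachable u v := by
    simpa [connected_iff, Preconnected] using hG
  exact Fintype.one_lt_card_iff_nontrivial.2
    ⟨G.connectedComponentMk u, G.connectedComponentMk v, fun h => huv (ConnectedComponent.exact h)⟩

/-- The parts are the fibres of `π`, and `d` is the reduced coloring between them. -/
def HasGallaiPartition (c : V → V → C) : Prop :=
  ∃ (p : ℕ) (π : V → Fin p) (d : Fin p → Fin p → C) (c₁ c₂ : C), 2 ≤ p ∧ Surjective π ∧
    (∀ u v, π u ≠ π v → c u v = d (π u) (π v)) ∧ ∀ i j, i ≠ j → d i j = c₁ ∨ d i j = c₂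

lemma HasGallaiPartition.of_reduction {d : W → W → C}
    (hd : HasGallaiPartition d) {π : V → W} (hπ : Surjective π)
    (hcd : ∀ u v, π u ≠ π v → c u v = d (π u) (π v)) : HasGallaiPartition c := by
  obtain ⟨p, σ, e, c₁, c₂, hp, hσ, hde, hcol⟩ := hd
  refine ⟨p, σ ∘ π, e, c₁, c₂, hp, hσ.comp hπ, fun u v huv => ?_, hcol⟩
  rw [hcd u v fun h => huv (congrArg σ h)]
  exact hde _ _ huv

lemma hasGallaiPartition_of_two_colors [Fintype V] (hV : 2 ≤ Fintype.card V)
    {c₁ c₂ : C} (h : ∀ x y, x ≠ y → c x y = c₁ ∨ c x y = c₂) : HasGallaiPartition c :=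
  let e := Fintype.equivFin V
  ⟨_, e, fun i j => c (e.symm i) (e.symm j), c₁, c₂, hV, e.surjective, fun _ _ _ => by simp,
    fun _ _ hij => h _ _ (e.symm.injective.ne hij)⟩

lemma IsGallai.hasGallaiPartition_of_contract (hc : IsGallai c) {γ : C}
    {s : (colorGraph c γ).ConnectedComponent → V}
    (hs : RightInverse s (colorGraph c γ).connectedComponentMk)
    (h : HasGallaiPartition fun K L => c (s K) (s L)) : HasGallaiPartition c :=
  h.of_reduction Quot.mk_surjective fun _ _ huv =>
    hc.color_eq_of_reachable₂ (ConnectedComponent.exact (hs _).symm)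
      (ConnectedComponent.exact (hs _).symm) fun h => huv (ConnectedComponent.sound h)

section Punctured

/- `π`, `d` partition `V \ {v}` as in `HasGallaiPartition`, with no cross color equal to `g`. -/

variable {v : V} {π : {x // x ≠ v} → W} {d : W → W → C} {g : C}

lemma IsGallai.exists_color_to_part (hc : IsGallai c) [Nontrivial W] (hπ : Surjective π)
    (hd : ∀ x y, π x ≠ π y → c x y = d (π x) (π y)) (hdg : ∀ i j, i ≠ j → d i j ≠ g)
    (hg : (colorGraph c g).Connected) (i : W) : ∃ x, π x = i ∧ c v x = g := by
  obtain ⟨j, hji⟩ := exists_ne i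
  obtain ⟨w, hw⟩ := hπ i
  obtain ⟨w', hw'⟩ := hπ j
  -- `g`-edges never join two parts, so a `g`-path leaving part `i` does so through `v`
  obtain ⟨e, -, ⟨hx, hxi⟩, hy⟩ := (hg.preconnected w w').some.exists_boundary_dart
    {x | ∃ hx : x ≠ v, π ⟨x, hx⟩ = i} ⟨w.2, hw⟩ fun ⟨_, h⟩ => hji (hw' ▸ h)
  obtain ⟨-, hcol⟩ := (colorGraph_adj hc.1).1 e.adj
  by_cases hyv : e.snd = v
  · exact ⟨⟨e.fst, hx⟩, hxi, (hc.1 _ _).trans (hyv ▸ hcol)⟩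
  · have hne : π ⟨e.fst, hx⟩ ≠ π ⟨e.snd, hyv⟩ := hxi ▸ fun h => hy ⟨hyv, h.symm⟩
    exact absurd ((hd _ _ hne).symm.trans hcol) (hdg _ _ hne)

lemma IsGallai.color_to_other_part (hc : IsGallai c) [Nontrivial W] (hπ : Surjective π)
    (hd : ∀ x y, π x ≠ π y → c x y = d (π x) (π y)) (hdg : ∀ i j, i ≠ j → d i j ≠ g)
    (hg : (colorGraph c g).Connected) {h : C} (hgh : h ≠ g) {y : {x // x ≠ v}} (hy : c v y = h)
    {i : W} (hi : i ≠ π y) : d i (π y) = h := by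
  obtain ⟨x, rfl, hvx⟩ := hc.exists_color_to_part hπ hd hdg hg i
  have hxy : (x : V) ≠ y := fun h => hi (congrArg π (Subtype.ext h))
  rcases hc.2 v x y x.2.symm hxy y.2.symm with h' | h' | h'
  · exact absurd ((hd x y hi) ▸ hvx ▸ h').symm (hdg _ _ hi)
  · rw [← hd x y hi, h', hy]
  · exact absurd (hvx ▸ hy ▸ h') hgh.symm

lemma IsGallai.eq_of_colorGraph_connected (hc : IsGallai c) [Nontrivial W] (hπ : Surjective π)
    (hd : ∀ x y, π x ≠ π y → c x y = d (π x) (π y)) (hdg : ∀ i j, i ≠ j → d i j ≠ g)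
    (hg : (colorGraph c g).Connected) {h₁ h₂ : C} (hg₁ : h₁ ≠ g) (hg₂ : h₂ ≠ g)
    (hh₁ : (colorGraph c h₁).Connected) (hh₂ : (colorGraph c h₂).Connected) : h₁ = h₂ := by
  have key : ∀ {h : C}, h ≠ g → ∀ {y : {x // x ≠ v}}, c v y = h → ∀ {i}, i ≠ π y →
      d i (π y) = h := fun hgh _ hy _ hi => hc.color_to_other_part hπ hd hdg hg hgh hy hi
  obtain ⟨w, -⟩ := hπ (Classical.arbitrary W)
  obtain ⟨y₁, hy₁⟩ := exists_color_eq_of_connected hc.1 hh₁ w.2.symm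
  obtain ⟨y₂, hy₂⟩ := exists_color_eq_of_connected hc.1 hh₂ w.2.symm
  by_cases hy : π y₁ = π y₂
  · obtain ⟨i, hi⟩ := exists_ne (π y₁)
    rw [← key hg₁ hy₁ hi, ← key hg₂ hy₂ (hy ▸ hi), hy]
  · calc h₁ = d (π y₂) (π y₁) := (key hg₁ hy₁ (Ne.symm hy)).symm
      _ = c y₂ y₁ := (hd _ _ (Ne.symm hy)).symm
      _ = c y₁ y₂ := hc.1 _ _
      _ = d (π y₁) (π y₂) := hd _ _ hy
      _ = h₂ := key hg₂ hy₂ hy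

lemma IsGallai.false_of_three_connected (hc : IsGallai c)
    (hv : HasGallaiPartition fun x y : {x // x ≠ v} => c x y) {g₁ g₂ g₃ : C} (h₁₂ : g₁ ≠ g₂)
    (h₁₃ : g₁ ≠ g₃) (h₂₃ : g₂ ≠ g₃) (hg₁ : (colorGraph c g₁).Connected)
    (hg₂ : (colorGraph c g₂).Connected) (hg₃ : (colorGraph c g₃).Connected) : False := by
  obtain ⟨p, π, d, r, b, hp, hπ, hd, hrb⟩ := hv
  have : Nontrivial (Fin p) := Fin.nontrivial_iff_two_le.2 hp
  have key : ∀ {g h₁ h₂ : C}, g ≠ r → g ≠ b → (colorGraph c g).Connected → h₁ ≠ g → h₂ ≠ g →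
      (colorGraph c h₁).Connected → (colorGraph c h₂).Connected → h₁ = h₂ :=
    fun hgr hgb hg => hc.eq_of_colorGraph_connected hπ hd (fun i j hij hdg =>
      (hrb i j hij).elim (fun h => hgr (hdg.symm.trans h)) fun h => hgb (hdg.symm.trans h)) hg
  by_cases hr₁ : g₁ = r ∨ g₁ = b
  · by_cases hr₂ : g₂ = r ∨ g₂ = b
    · by_cases hr₃ : g₃ = r ∨ g₃ = b
      · grind
      · push Not at hr₃
        exact h₁₂ (key hr₃.1 hr₃.2 hg₃ h₁₃ h₂₃ hg₁ hg₂)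
    · push Not at hr₂
      exact h₁₃ (key hr₂.1 hr₂.2 hg₂ h₁₂ h₂₃.symm hg₁ hg₃)
  · push Not at hr₁
    exact h₂₃ (key hr₁.1 hr₁.2 hg₁ h₁₂.symm h₁₃.symm hg₂ hg₃)

end Punctured

theorem IsGallai.hasGallaiPartition [Fintype V] (hc : IsGallai c)
    (hV : 2 ≤ Fintype.card V) : HasGallaiPartition c := by
  induction hn : Fintype.card V using Nat.strong_induction_on generalizing V with
  | _ n ih =>
  classical
  by_cases hsplit : ∃ γ x y, (colorGraph c γ).Adj x y ∧ ¬ (colorGraph c γ).Connected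
  · obtain ⟨γ, x, y, hxy, hγ⟩ := hsplit
    have : Nonempty V := ⟨x⟩
    have hs := rightInverse_surjInv (Quot.mk_surjective (r := (colorGraph c γ).Reachable))
    exact hc.hasGallaiPartition_of_contract hs (ih _ (hn ▸ card_connectedComponent_lt hxy)
      (hc.comp_injective hs.injective) (one_lt_card_connectedComponent hγ) rfl)
  push Not at hsplit
  by_cases htwo : ∃ c₁ c₂, ∀ x y, x ≠ y → c x y = c₁ ∨ c x y = c₂
  · obtain ⟨c₁, c₂, htwo⟩ := htwo
    exact hasGallaiPartition_of_two_colors hV htwo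
  push Not at htwo
  obtain ⟨x₀, y₀, h₀⟩ := Fintype.exists_pair_of_one_lt_card hV
  obtain ⟨x₁, y₁, h₁, h₀₁, -⟩ := htwo (c x₀ y₀) (c x₀ y₀)
  obtain ⟨x₂, y₂, h₂, h₀₂, h₁₂⟩ := htwo (c x₀ y₀) (c x₁ y₁)
  have hconn : ∀ x y, x ≠ y → (colorGraph c (c x y)).Connected := fun x y hxy =>
    hsplit _ x y ((colorGraph_adj hc.1).2 ⟨hxy, rfl⟩)
  have : Nontrivial {x // x ≠ x₀} := by
    obtain ⟨z₀, hz₀⟩ := exists_color_eq_of_connected hc.1 (hconn x₀ y₀ h₀) h₀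
    obtain ⟨z₁, hz₁⟩ := exists_color_eq_of_connected hc.1 (hconn x₁ y₁ h₁) h₀
    exact ⟨z₀, z₁, fun h => h₀₁ (hz₁ ▸ hz₀ ▸ h ▸ rfl)⟩
  have hpunct := ih _ (hn ▸ Fintype.card_subtype_lt (x := x₀) (by simp))
    (hc.comp_injective Subtype.val_injective) (Fintype.one_lt_card_iff_nontrivial.2 this) rfl
  exact (hc.false_of_three_connected hpunct h₀₁.symm h₀₂.symm h₁₂.symm (hconn x₀ y₀ h₀)
    (hconn x₁ y₁ h₁) (hconn x₂ y₂ h₂)).elim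

end

theorem gallai_partition {V C : Type*} [Fintype V] (c : V → V → C) (hc : IsGallai c)
    (hV : 2 ≤ Fintype.card V) :
    ∃ (p : ℕ) (parts : Fin p → Set V) (col : Fin p → Fin p → C) (c1 c2 : C),
      2 ≤ p ∧
      (∀ i, (parts i).Nonempty) ∧
      (∀ i j, i ≠ j → Disjoint (parts i) (parts j)) ∧
      (⋃ i, parts i) = Set.univ ∧
      (∀ i j, i ≠ j → ∀ u ∈ parts i, ∀ v ∈ parts j, c u v = col i j) ∧
      (∀ i j, i ≠ j → col i j = c1 ∨ col i j = c2) := by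
  obtain ⟨p, π, d, c₁, c₂, hp, hπ, hd, hcol⟩ := hc.hasGallaiPartition hV
  refine ⟨p, fun i => π ⁻¹' {i}, d, c₁, c₂, hp, fun i => hπ i, fun i j hij => ?_,
    Set.eq_univ_of_forall fun x => Set.mem_iUnion.2 ⟨π x, rfl⟩, ?_, hcol⟩
  · exact Set.disjoint_left.2 fun x hi hj => hij (hi.symm.trans hj)
  · rintro i j hij u rfl v rfl
    exact hd u v hij
end
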